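/- arXiv:2102.05502 — 2 statements merged into one kernel-verified Lean document; each statement's English description precedes it below -/
import Mathlib

section
/- Let V ~ Beta(α+1, β+1) with α, β > 0 integers, T = α + β and M = α/(α + β). Then for all c ∈ (0,1) with c ≤ M: P(V ≤ c) ≤ (e^{1/12} √T / √(2π)) · exp(−T (M − c)²). -/
/-!
On `[0, M]` the Beta kernel `x^α (1-x)^β` is at most its maximum `M^α (1-M)^β` times
`exp (-2T (x-M)²)` (Pinsker's inequality for Bernoulli laws), and for `x ≤ c ≤ M` we have
`(x-M)² ≥ (M-c)² + (c-x)²`. Hence the tail integral is at most `M^α (1-M)^β e^{-2T(M-c)²}` times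
the half Gaussian integral `√(π/8T)`. The density of `Beta(α+1, β+1)` at its mode is `T · R(α, β)`
with `R` decreasing in each argument, because `(1 + 1/n)^n` increases; so `R ≤ R(1, 2) = 16/27`
once `T ≥ 3`, and `16/27 · π/2 < e^{1/12}`. For `α = β = 1` the tail is the cubic `3c² - 2c³`.
-/

open MeasureTheory ProbabilityTheory Real

namespace TSPaper

/-- The Beta function `B(a,b) = Γ(a)Γ(b)/Γ(a+b)`. -/
noncomputable def betaFun (a b : ℝ) : ℝ := Real.Gamma a * Real.Gamma b / Real.Gamma (a + b)

/-- The Beta(a,b) distribution on `ℝ`, with density `x^(a-1) (1-x)^(b-1) / B(a,b)`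
on `(0,1)`. -/
noncomputable def betaMeasure (a b : ℝ) : Measure ℝ :=
  (volume.restrict (Set.Ioo (0 : ℝ) 1)).withDensity
    fun y => ENNReal.ofReal (y ^ (a - 1) * (1 - y) ^ (b - 1) / betaFun a b)

open Nat

lemma one_add_inv_pow_le_one_add_inv_pow_succ (n : ℕ) :
    (1 + (n : ℝ)⁻¹) ^ n ≤ (1 + ((n + 1 : ℕ) : ℝ)⁻¹) ^ (n + 1) := by
  rcases n.eq_zero_or_pos with rfl | hn
  · norm_num
  have hn' : (0 : ℝ) < n := by exact_mod_cast hn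
  have bernoulli : 1 + ((n + 1 : ℕ) : ℝ) * -(((n : ℝ) + 1) ^ 2)⁻¹ ≤
      (1 + -(((n : ℝ) + 1) ^ 2)⁻¹) ^ (n + 1) :=
    one_add_mul_le_pow (by
      have : (((n : ℝ) + 1) ^ 2)⁻¹ ≤ 1 := inv_le_one_of_one_le₀ (by nlinarith)
      linarith) _
  have hinv : 1 + (n : ℝ)⁻¹ = (n + 1) / n := by field_simp
  calc (1 + (n : ℝ)⁻¹) ^ n
      = (1 + (n : ℝ)⁻¹) ^ (n + 1) * (1 + ((n + 1 : ℕ) : ℝ) * -(((n : ℝ) + 1) ^ 2)⁻¹) := by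
        rw [hinv, div_pow, div_pow]; push_cast; field_simp; ring
    _ ≤ (1 + (n : ℝ)⁻¹) ^ (n + 1) * (1 + -(((n : ℝ) + 1) ^ 2)⁻¹) ^ (n + 1) := by gcongr
    _ = _ := by rw [← mul_pow]; push_cast; congr 1; field_simp; ring

lemma monotone_one_add_inv_pow : Monotone fun n : ℕ => (1 + (n : ℝ)⁻¹) ^ n :=
  monotone_nat_of_le_succ one_add_inv_pow_le_one_add_inv_pow_succ

/-- The density of `Beta(a+1, b+1)` at its mode `a / (a+b)`. -/
noncomputable def betaModeDensity (a b : ℕ) : ℝ :=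
  (a + b + 1)! / (a ! * b !) * ((a : ℝ) / (a + b)) ^ a * ((b : ℝ) / (a + b)) ^ b

lemma betaModeDensity_comm (a b : ℕ) : betaModeDensity a b = betaModeDensity b a := by
  unfold betaModeDensity
  rw [add_comm b a, add_comm (b : ℝ)]
  ring

lemma betaModeDensity_succ_right (a : ℕ) {b : ℕ} (hb : 0 < b) :
    betaModeDensity a (b + 1) / (a + (b + 1 : ℕ)) =
      betaModeDensity a b / (a + b) * (((a + b + 2) * (a + b)) / (a + b + 1) ^ 2) *
        ((1 + (b : ℝ)⁻¹) ^ b / (1 + ((a + b : ℕ) : ℝ)⁻¹) ^ (a + b)) := by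
  have hb' : (0 : ℝ) < b := by exact_mod_cast hb
  have hT : (0 : ℝ) < a + b := by positivity
  unfold betaModeDensity
  rw [show a + (b + 1) + 1 = (a + b + 1) + 1 by omega, factorial_succ (a + b + 1),
    factorial_succ b]
  push_cast
  rw [show 1 + (b : ℝ)⁻¹ = (b + 1) / b by field_simp,
    show 1 + ((a : ℝ) + b)⁻¹ = (a + b + 1) / (a + b) by field_simp]
  simp only [div_pow]
  field_simp
  ring

lemma betaModeDensity_nonneg (a b : ℕ) : 0 ≤ betaModeDensity a b := by
  unfold betaModeDensity; positivity

lemma betaModeDensity_div_le_of_le (a : ℕ) {b b' : ℕ} (hb : 0 < b) (hbb' : b ≤ b') :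
    betaModeDensity a b' / (a + b') ≤ betaModeDensity a b / (a + b) := by
  induction b', hbb' using Nat.le_induction with
  | base => exact le_rfl
  | succ n hn ih =>
    have hn₀ : (0 : ℝ) < n := by exact_mod_cast hb.trans_le hn
    have hquad : ((a : ℝ) + n + 2) * (a + n) / (a + n + 1) ^ 2 ≤ 1 :=
      (div_le_one (by positivity)).2 (by nlinarith)
    have hpow : (1 + (n : ℝ)⁻¹) ^ n / (1 + ((a + n : ℕ) : ℝ)⁻¹) ^ (a + n) ≤ 1 :=
      div_le_one_of_le₀ (monotone_one_add_inv_pow (by omega : n ≤ a + n)) (by positivity)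
    have hdens : 0 ≤ betaModeDensity a n / (a + n) :=
      div_nonneg (betaModeDensity_nonneg a n) (by positivity)
    rw [betaModeDensity_succ_right a (hb.trans_le hn)]
    refine le_trans ?_ ih
    exact (mul_le_of_le_one_right (mul_nonneg hdens (by positivity)) hpow).trans
      (mul_le_of_le_one_right hdens hquad)

lemma betaModeDensity_le (a b : ℕ) (ha : 0 < a) (hb : 0 < b) (hab : 3 ≤ a + b) :
    betaModeDensity a b ≤ 16 / 27 * (a + b) := by
  have h12 : betaModeDensity 1 2 / (1 + 2) = 16 / 27 := by
    norm_num [betaModeDensity, factorial]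
  rw [← div_le_iff₀ (by positivity), ← h12]
  rcases Nat.lt_or_ge b 2 with hb2 | hb2
  · obtain rfl : b = 1 := by omega
    have := betaModeDensity_div_le_of_le 1 (b := 2) (by norm_num) (by omega : 2 ≤ a)
    rw [betaModeDensity_comm, add_comm (a : ℝ)]
    simpa using this
  · have h₁ := betaModeDensity_div_le_of_le a (b := 2) (by norm_num) hb2
    have h₂ := betaModeDensity_div_le_of_le 2 (b := 1) (by norm_num) ha
    rw [betaModeDensity_comm 2 1] at h₂
    rw [betaModeDensity_comm a 2] at h₁
    push_cast at h₁ h₂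
    rw [add_comm (2 : ℝ) a] at h₂
    norm_num at h₂ ⊢
    exact h₁.trans h₂

lemma pow_mul_one_sub_pow_le_mul_exp {α β : ℕ} (hα : 0 < α) (hβ : 0 < β) {x : ℝ} (hx : 0 ≤ x)
    (hxM : x ≤ α / (α + β)) :
    x ^ α * (1 - x) ^ β ≤ ((α : ℝ) / (α + β)) ^ α * (1 - α / (α + β)) ^ β *
      exp (-2 * (α + β) * (x - α / (α + β)) ^ 2) := by
  obtain ⟨a, rfl⟩ := Nat.exists_eq_add_one_of_ne_zero hα.ne'
  obtain ⟨b, rfl⟩ := Nat.exists_eq_add_one_of_ne_zero hβ.ne'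
  push_cast at hxM ⊢
  set T : ℝ := a + 1 + (b + 1) with hT
  set M : ℝ := (a + 1) / T
  have hT₀ : 0 < T := by positivity
  have hM₀ : 0 ≤ M := by positivity
  have hTM : T * M = a + 1 := mul_div_cancel₀ _ hT₀.ne'
  have hM₁ : M ≤ 1 := (div_le_one hT₀).2 (by linarith [(b.cast_nonneg : (0 : ℝ) ≤ b)])
  clear_value T M
  let ψ : ℝ → ℝ := fun y => y ^ (a + 1) * (1 - y) ^ (b + 1) * exp (2 * T * (y - M) ^ 2)
  -- `(a+1)(1-y) - (b+1)y + 4T(y-M)y(1-y) = T(M-y)(2y-1)²`, nonnegative for `y ≤ M`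
  have hψ' : ∀ y, HasDerivAt ψ
      (exp (2 * T * (y - M) ^ 2) * y ^ a * (1 - y) ^ b * (T * (M - y) * (2 * y - 1) ^ 2)) y := by
    intro y
    have hd₁ : HasDerivAt (fun y : ℝ => y ^ (a + 1)) ((a + 1 : ℕ) * y ^ a) y :=
      hasDerivAt_pow (a + 1) y
    have hd₂ : HasDerivAt (fun y : ℝ => (1 - y) ^ (b + 1)) ((b + 1 : ℕ) * (1 - y) ^ b * -1) y :=
      (hasDerivAt_pow (b + 1) (1 - y)).comp y ((hasDerivAt_id y).const_sub 1)
    have hd₃ : HasDerivAt (fun y : ℝ => exp (2 * T * (y - M) ^ 2))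
        (exp (2 * T * (y - M) ^ 2) * (2 * T * (2 * (y - M)))) y := by
      refine HasDerivAt.exp ?_
      simpa using (((hasDerivAt_id y).sub_const M).pow 2).const_mul (2 * T)
    refine ((hd₁.mul hd₂).mul hd₃).congr_deriv ?_
    simp only [Pi.mul_apply]
    push_cast
    linear_combination (-(exp (2 * T * (y - M) ^ 2) * y ^ a * (1 - y) ^ b)) * hTM +
      (exp (2 * T * (y - M) ^ 2) * y ^ a * (1 - y) ^ b * y) * hT
  have hmono : MonotoneOn ψ (Set.Icc 0 M) := by
    refine monotoneOn_of_deriv_nonneg (convex_Icc 0 M) (by fun_prop)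
      (fun y _ => (hψ' y).differentiableAt.differentiableWithinAt) fun y hy => ?_
    rw [interior_Icc] at hy
    have hy₁ : 0 ≤ 1 - y := by linarith [hy.2, hM₁]
    rw [(hψ' y).deriv]
    have := hy.1.le
    have : 0 ≤ M - y := sub_nonneg.2 hy.2.le
    positivity
  calc x ^ (a + 1) * (1 - x) ^ (b + 1) = ψ x * exp (-(2 * T * (x - M) ^ 2)) := by
        simp only [ψ, mul_assoc, ← exp_add, add_neg_cancel, exp_zero, mul_one]
    _ ≤ ψ M * exp (-(2 * T * (x - M) ^ 2)) := by
        gcongr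
        exact hmono ⟨hx, hxM⟩ ⟨hM₀, le_rfl⟩ hxM
    _ = _ := by simp [ψ, neg_mul]

lemma integral_exp_neg_mul_sub_sq_le {b c : ℝ} (hb : 0 < b) (hc : 0 ≤ c) :
    ∫ x in (0 : ℝ)..c, exp (-b * (c - x) ^ 2) ≤ √(π / b) / 2 := by
  have hreflect := intervalIntegral.integral_comp_sub_left (fun x => exp (-b * x ^ 2)) c
    (a := 0) (b := c)
  simp only [sub_self, sub_zero] at hreflect
  rw [hreflect, intervalIntegral.integral_of_le hc, ← integral_gaussian_Ioi b]
  exact setIntegral_mono_set (integrable_exp_neg_mul_sq hb).integrableOn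
    (.of_forall fun _ => (exp_pos _).le) (.of_forall fun _ hx => hx.1)

lemma integral_pow_mul_one_sub_pow_le {α β : ℕ} (hα : 0 < α) (hβ : 0 < β) {c : ℝ} (hc : 0 ≤ c)
    (hcM : c ≤ α / (α + β)) :
    ∫ x in (0 : ℝ)..c, x ^ α * (1 - x) ^ β ≤ ((α : ℝ) / (α + β)) ^ α * (1 - α / (α + β)) ^ β *
      exp (-2 * (α + β) * (α / (α + β) - c) ^ 2) * (√(π / (2 * (α + β))) / 2) := by
  set T : ℝ := α + β
  set M : ℝ := α / T
  have hT : 0 < T := by positivity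
  have hM₁ : 0 ≤ 1 - M := sub_nonneg.2 ((div_le_one hT).2 (by simp [T]))
  have hpointwise : ∀ x ∈ Set.Icc 0 c, x ^ α * (1 - x) ^ β ≤
      M ^ α * (1 - M) ^ β * exp (-2 * T * (M - c) ^ 2) * exp (-(2 * T) * (c - x) ^ 2) := by
    intro x hx
    calc x ^ α * (1 - x) ^ β ≤ M ^ α * (1 - M) ^ β * exp (-2 * T * (x - M) ^ 2) :=
          pow_mul_one_sub_pow_le_mul_exp hα hβ hx.1 (hx.2.trans hcM)
      _ ≤ _ := by
          rw [mul_assoc _ (exp _), ← exp_add]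
          gcongr
          nlinarith [mul_nonneg (mul_nonneg hT.le (sub_nonneg.2 hx.2)) (sub_nonneg.2 hcM)]
  calc ∫ x in (0 : ℝ)..c, x ^ α * (1 - x) ^ β
      ≤ ∫ x in (0 : ℝ)..c, M ^ α * (1 - M) ^ β * exp (-2 * T * (M - c) ^ 2) *
          exp (-(2 * T) * (c - x) ^ 2) :=
        intervalIntegral.integral_mono_on hc (Continuous.intervalIntegrable (by fun_prop) _ _)
          (Continuous.intervalIntegrable (by fun_prop) _ _) hpointwise
    _ ≤ _ := by
        rw [intervalIntegral.integral_const_mul]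
        gcongr
        exact integral_exp_neg_mul_sub_sq_le (by positivity) hc

lemma betaFun_natCast_add_one (α β : ℕ) :
    betaFun (α + 1) (β + 1) = α ! * β ! / (α + β + 1)! := by
  rw [betaFun, show (α : ℝ) + 1 + (β + 1) = ((α + β + 1 : ℕ) : ℝ) + 1 by push_cast; ring]
  simp only [Real.Gamma_nat_eq_factorial]

lemma betaMeasure_Iic (α β : ℕ) {c : ℝ} (hc₀ : 0 ≤ c) (hc₁ : c < 1) :
    betaMeasure (α + 1) (β + 1) (Set.Iic c) =
      ENNReal.ofReal ((α + β + 1)! / (α ! * β !) * ∫ x in (0 : ℝ)..c, x ^ α * (1 - x) ^ β) := by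
  have hIoc : Set.Iic c ∩ Set.Ioo 0 1 = Set.Ioc 0 c := by
    ext y
    simp only [Set.mem_inter_iff, Set.mem_Iic, Set.mem_Ioo, Set.mem_Ioc]
    exact ⟨fun ⟨h, h₀, _⟩ => ⟨h₀, h⟩, fun ⟨h₀, h⟩ => ⟨h, h₀, h.trans_lt hc₁⟩⟩
  have hdensity : ∀ y : ℝ, y ^ ((α : ℝ) + 1 - 1) * (1 - y) ^ ((β : ℝ) + 1 - 1) =
      y ^ α * (1 - y) ^ β := by
    intro y
    simp only [add_sub_cancel_right, Real.rpow_natCast]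
  rw [betaMeasure, withDensity_apply _ measurableSet_Iic,
    Measure.restrict_restrict measurableSet_Iic, hIoc]
  simp_rw [hdensity, betaFun_natCast_add_one]
  rw [← ofReal_integral_eq_lintegral_ofReal, ← intervalIntegral.integral_of_le hc₀,
    intervalIntegral.integral_div]
  · field_simp
  · exact (Continuous.integrableOn_Icc (by fun_prop)).mono_set Set.Ioc_subset_Icc_self
  · filter_upwards [ae_restrict_mem measurableSet_Ioc] with y hy
    have : 0 ≤ 1 - y := by linarith [hy.2]
    have := hy.1.le
    positivity

lemma gaussian_constant_le {T : ℝ} (hT : 0 < T) :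
    16 / 27 * T * (√(π / (2 * T)) / 2) ≤ exp (1 / 12) * √T / √(2 * π) := by
  have hπ : 8 / 27 * π ≤ exp (1 / 12) := by
    linarith [pi_lt_d2, add_one_le_exp (1 / 12 : ℝ)]
  rw [sqrt_div' _ (by positivity), sqrt_mul zero_le_two, sqrt_mul zero_le_two]
  have hs := sq_sqrt hT.le
  have hp := sq_sqrt pi_pos.le
  have : 0 < √T := sqrt_pos.2 hT
  have : 0 < √π := sqrt_pos.2 pi_pos
  have : 0 < √2 := sqrt_pos.2 two_pos
  calc 16 / 27 * T * (√π / (√2 * √T) / 2) = 8 / 27 * π * √T / (√2 * √π) := by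
        field_simp
        rw [hs, hp]
        ring
    _ ≤ _ := by gcongr

lemma six_mul_integral_mul_one_sub_le {c : ℝ} (hc₀ : 0 ≤ c) (hc : c ≤ 1 / 2) :
    6 * ∫ x in (0 : ℝ)..c, x * (1 - x) ≤ exp (1 / 12) / √π * exp (-2 * (1 / 2 - c) ^ 2) := by
  have hintegral : ∫ x in (0 : ℝ)..c, x * (1 - x) = c ^ 2 / 2 - c ^ 3 / 3 := by
    simp_rw [mul_one_sub, ← sq]
    rw [intervalIntegral.integral_sub intervalIntegral.intervalIntegrable_id
      (intervalIntegral.intervalIntegrable_pow 2), integral_id, integral_pow]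
    ring
  have hconst : 3 / 5 ≤ exp (1 / 12) / √π := by
    have hsqrt : √π ≤ 65 / 36 := sqrt_le_iff.2 ⟨by norm_num, by nlinarith [pi_lt_d2]⟩
    rw [le_div_iff₀ (sqrt_pos.2 pi_pos)]
    nlinarith [add_one_le_exp (1 / 12 : ℝ), sqrt_nonneg π]
  have hexp : 1 - 2 * (1 / 2 - c) ^ 2 ≤ exp (-2 * (1 / 2 - c) ^ 2) := by
    linarith [add_one_le_exp (-2 * (1 / 2 - c) ^ 2)]
  have hpoly : 3 * c ^ 2 - 2 * c ^ 3 ≤ 3 / 5 * (1 - 2 * (1 / 2 - c) ^ 2) := by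
    nlinarith [mul_nonneg (sub_nonneg.2 hc) (sq_nonneg (c - 1 / 2)),
      mul_nonneg hc₀ (sub_nonneg.2 hc)]
  have hpos : 0 ≤ 1 - 2 * (1 / 2 - c) ^ 2 := by nlinarith
  calc 6 * ∫ x in (0 : ℝ)..c, x * (1 - x) = 3 * c ^ 2 - 2 * c ^ 3 := by rw [hintegral]; ring
    _ ≤ 3 / 5 * (1 - 2 * (1 / 2 - c) ^ 2) := hpoly
    _ ≤ exp (1 / 12) / √π * exp (-2 * (1 / 2 - c) ^ 2) := by gcongr

lemma factorial_div_mul_integral_le {α β : ℕ} (hα : 0 < α) (hβ : 0 < β) {c : ℝ} (hc : 0 ≤ c)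
    (hcM : c ≤ α / (α + β)) :
    (α + β + 1)! / (α ! * β !) * ∫ x in (0 : ℝ)..c, x ^ α * (1 - x) ^ β ≤
      exp (1 / 12) * √(α + β) / √(2 * π) * exp (-(α + β) * (α / (α + β) - c) ^ 2) := by
  rcases (by omega : α = 1 ∧ β = 1 ∨ 3 ≤ α + β) with ⟨rfl, rfl⟩ | hαβ
  · have h := six_mul_integral_mul_one_sub_le hc (by norm_num at hcM; linarith)
    norm_num [factorial] at h ⊢
    rwa [mul_comm (exp _), mul_div_mul_left _ _ (by positivity)]
  have hT : (0 : ℝ) < α + β := by positivity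
  have hM : 1 - (α : ℝ) / (α + β) = β / (α + β) := by field_simp; ring
  have hexp : exp (-2 * (α + β) * (α / (α + β) - c) ^ 2) ≤
      exp (-(α + β) * (α / (α + β) - c) ^ 2) := by
    gcongr
    nlinarith [sq_nonneg ((α : ℝ) / (α + β) - c)]
  calc (α + β + 1)! / (α ! * β !) * ∫ x in (0 : ℝ)..c, x ^ α * (1 - x) ^ β
      ≤ (α + β + 1)! / (α ! * β !) * (((α : ℝ) / (α + β)) ^ α * (1 - α / (α + β)) ^ β *
          exp (-2 * (α + β) * (α / (α + β) - c) ^ 2) * (√(π / (2 * (α + β))) / 2)) := by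
        gcongr
        exact integral_pow_mul_one_sub_pow_le hα hβ hc hcM
    _ = betaModeDensity α β * (√(π / (2 * (α + β))) / 2) *
          exp (-2 * (α + β) * (α / (α + β) - c) ^ 2) := by
        rw [hM, betaModeDensity]; ring
    _ ≤ 16 / 27 * (α + β) * (√(π / (2 * (α + β))) / 2) *
          exp (-(α + β) * (α / (α + β) - c) ^ 2) := by
        gcongr
        exact betaModeDensity_le α β hα hβ hαβ
    _ ≤ _ := by
        gcongr
        exact gaussian_constant_le hT

theorem beta_cdf_gaussian_bound_general
    {Ω : Type} [MeasurableSpace Ω] (μ : Measure Ω)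
    (α β : ℕ) (hα : 0 < α) (hβ : 0 < β)
    (V : Ω → ℝ) (hmeas : Measurable V)
    (hlaw : μ.map V = betaMeasure ((α : ℝ) + 1) ((β : ℝ) + 1))
    (c : ℝ) (hc : c ∈ Set.Ioo (0 : ℝ) 1) (hcM : c ≤ (α : ℝ) / ((α : ℝ) + β)) :
    μ {ω | V ω ≤ c} ≤
      ENNReal.ofReal
        (Real.exp (1 / 12) * Real.sqrt ((α : ℝ) + β) / Real.sqrt (2 * Real.pi)
          * Real.exp (-((α : ℝ) + β) * ((α : ℝ) / ((α : ℝ) + β) - c) ^ 2)) := by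
  change μ (V ⁻¹' Set.Iic c) ≤ _
  rw [← Measure.map_apply hmeas measurableSet_Iic, hlaw,
    betaMeasure_Iic α β hc.1.le hc.2]
  exact ENNReal.ofReal_le_ofReal (factorial_div_mul_integral_le hα hβ hc.1.le hcM)

/-- **Lemma** (Gaussian-type bound on the lower tail of a Beta distribution): let
`V ~ Beta(α+1, β+1)` with `α, β` positive integers, `T = α + β` and `M = α/(α+β)`.
Then for all `c ∈ (0,1)` with `c ≤ M`,
`P(V ≤ c) ≤ (e^(1/12) √T / √(2π)) exp(-T (M-c)²)`. -/
theorem beta_cdf_gaussian_bound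
    {Ω : Type} [MeasurableSpace Ω] (μ : Measure Ω) [IsProbabilityMeasure μ]
    (α β : ℕ) (hα : 0 < α) (hβ : 0 < β)
    (V : Ω → ℝ) (hmeas : Measurable V)
    (hlaw : μ.map V = betaMeasure ((α : ℝ) + 1) ((β : ℝ) + 1))
    (c : ℝ) (hc : c ∈ Set.Ioo (0 : ℝ) 1) (hcM : c ≤ (α : ℝ) / ((α : ℝ) + β)) :
    μ {ω | V ω ≤ c} ≤
      ENNReal.ofReal
        (Real.exp (1 / 12) * Real.sqrt ((α : ℝ) + β) / Real.sqrt (2 * Real.pi)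
          * Real.exp (-((α : ℝ) + β) * ((α : ℝ) / ((α : ℝ) + β) - c) ^ 2)) :=
  beta_cdf_gaussian_bound_general μ α β hα hβ V hmeas hlaw c hc hcM

end TSPaper
end

section
/- Let V ~ Beta(α+1, β+1) with α, β > 0 integers, T = α + β and M = α/(α + β). Then for every ν ∈ (0,1]: P( V ≤ M − √((1/T) · ln(e^{1/12} √T / (ν √(2π)))) ) ≤ ν. -/
open MeasureTheory ProbabilityTheory Real

namespace TSPaper

section Aux
open Set

private lemma bern (n : ℕ) (hn : 1 ≤ n) :
    ((n : ℝ) + 1) ^ (2 * n + 1) ≤ (n : ℝ) ^ n * ((n : ℝ) + 2) ^ (n + 1) := by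
  have hn' : (1 : ℝ) ≤ (n : ℝ) := by exact_mod_cast hn
  have hx : (0 : ℝ) < (n : ℝ) + 1 := by linarith
  have h2 : (-2 : ℝ) ≤ -(1 / ((n : ℝ) + 1) ^ 2) := by
    have h1 : (1 : ℝ) ≤ ((n : ℝ) + 1) ^ 2 := by nlinarith
    have : 1 / ((n : ℝ) + 1) ^ 2 ≤ 1 := by
      rw [div_le_one (by positivity)]; exact h1
    linarith
  have key := one_add_mul_le_pow h2 (n + 1)
  have e1 : (1 : ℝ) + ((n + 1 : ℕ) : ℝ) * (-(1 / ((n : ℝ) + 1) ^ 2)) = (n : ℝ) / ((n : ℝ) + 1) := by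
    push_cast; field_simp; ring
  have e2 : (1 : ℝ) + -(1 / ((n : ℝ) + 1) ^ 2) = ((n : ℝ) * ((n : ℝ) + 2)) / (((n : ℝ) + 1) ^ 2) := by
    field_simp; ring
  rw [e1, e2, div_pow] at key
  rw [div_le_div_iff₀ hx (by positivity)] at key
  rw [← pow_mul] at key
  -- key : n * (n+1)^(2*(n+1)) ≤ (n*(n+2))^(n+1) * (n+1)
  have hpos : (0 : ℝ) < (n : ℝ) * ((n : ℝ) + 1) := by nlinarith
  apply le_of_mul_le_mul_right _ hpos
  calc ((n : ℝ) + 1) ^ (2 * n + 1) * ((n : ℝ) * ((n : ℝ) + 1))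
      = (n : ℝ) * ((n : ℝ) + 1) ^ (2 * (n + 1)) := by ring
    _ ≤ ((n : ℝ) * ((n : ℝ) + 2)) ^ (n + 1) * ((n : ℝ) + 1) := key
    _ = (n : ℝ) ^ n * ((n : ℝ) + 2) ^ (n + 1) * ((n : ℝ) * ((n : ℝ) + 1)) := by
        rw [mul_pow]; ring

private lemma ratio_mono (a T : ℕ) (ha : 1 ≤ a) (h : a ≤ T) :
    ((a : ℝ) + 1) ^ a * (T : ℝ) ^ T ≤ (a : ℝ) ^ a * ((T : ℝ) + 1) ^ T := by
  induction T, h using Nat.le_induction with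
  | base => linarith [mul_comm ((a : ℝ) ^ a) (((a : ℝ) + 1) ^ a)]
  | succ T hT IH =>
    push_cast
    have haT : (1 : ℕ) ≤ T := le_trans ha hT
    have hb := bern T haT
    have h1 : (0 : ℝ) < ((T : ℝ) + 1) ^ T := by positivity
    apply le_of_mul_le_mul_right _ h1
    have hT1 : (0 : ℝ) ≤ (T : ℝ) := by positivity
    calc ((a : ℝ) + 1) ^ a * ((T : ℝ) + 1) ^ (T + 1) * ((T : ℝ) + 1) ^ T
        = ((a : ℝ) + 1) ^ a * ((T : ℝ) + 1) ^ (2 * T + 1) := by ring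
      _ ≤ ((a : ℝ) + 1) ^ a * ((T : ℝ) ^ T * ((T : ℝ) + 2) ^ (T + 1)) := by
          apply mul_le_mul_of_nonneg_left hb (by positivity)
      _ = (((a : ℝ) + 1) ^ a * (T : ℝ) ^ T) * ((T : ℝ) + 2) ^ (T + 1) := by ring
      _ ≤ ((a : ℝ) ^ a * ((T : ℝ) + 1) ^ T) * ((T : ℝ) + 2) ^ (T + 1) := by
          apply mul_le_mul_of_nonneg_right IH (by positivity)
      _ = (a : ℝ) ^ a * ((T : ℝ) + 1 + 1) ^ (T + 1) * ((T : ℝ) + 1) ^ T := by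
          push_cast; ring

private lemma core (a T : ℕ) (ha : 1 ≤ a) (h : a ≤ T) :
    (T : ℝ) ^ (T + 1) * ((T : ℝ) + 2) * ((a : ℝ) + 1) ^ a
      ≤ ((T : ℝ) + 1) ^ (T + 2) * (a : ℝ) ^ a := by
  have h1 := ratio_mono a T ha h
  have hT1 : (1 : ℝ) ≤ (T : ℝ) := by exact_mod_cast le_trans ha h
  have hq : (T : ℝ) * ((T : ℝ) + 2) ≤ ((T : ℝ) + 1) ^ 2 := by nlinarith
  have h2 : (T : ℝ) * ((T : ℝ) + 2) * (((a : ℝ) + 1) ^ a * (T : ℝ) ^ T)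
      ≤ ((T : ℝ) + 1) ^ 2 * ((a : ℝ) ^ a * ((T : ℝ) + 1) ^ T) := by
    apply mul_le_mul hq h1 (by positivity) (by positivity)
  calc (T : ℝ) ^ (T + 1) * ((T : ℝ) + 2) * ((a : ℝ) + 1) ^ a
      = (T : ℝ) * ((T : ℝ) + 2) * (((a : ℝ) + 1) ^ a * (T : ℝ) ^ T) := by ring
    _ ≤ ((T : ℝ) + 1) ^ 2 * ((a : ℝ) ^ a * ((T : ℝ) + 1) ^ T) := h2
    _ = ((T : ℝ) + 1) ^ (T + 2) * (a : ℝ) ^ a := by ring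


private lemma incr (a b : ℕ) (ha : 1 ≤ a) (hb : 1 ≤ b)
    (IH : ((a + b + 1).factorial : ℝ) * (a : ℝ) ^ a * (b : ℝ) ^ b * 27
      ≤ 16 * ((a + b : ℕ) : ℝ) * (a.factorial : ℝ) * (b.factorial : ℝ) * ((a + b : ℕ) : ℝ) ^ (a + b)) :
    (((a + 1) + b + 1).factorial : ℝ) * ((a + 1 : ℕ) : ℝ) ^ (a + 1) * (b : ℝ) ^ b * 27
      ≤ 16 * (((a + 1) + b : ℕ) : ℝ) * ((a + 1).factorial : ℝ) * (b.factorial : ℝ)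
        * (((a + 1) + b : ℕ) : ℝ) ^ ((a + 1) + b) := by
  have hab : a ≤ a + b := Nat.le_add_right a b
  have hcore := core a (a + b) ha hab
  set T : ℕ := a + b with hT
  have hfac2 : ((a + 1) + b + 1) = (T + 1) + 1 := by omega
  have hfacT : (((T + 1) + 1).factorial : ℝ) = ((T : ℝ) + 2) * ((T + 1).factorial : ℝ) := by
    rw [Nat.factorial_succ]; push_cast; ring
  have hfaca : (((a + 1)).factorial : ℝ) = ((a : ℝ) + 1) * (a.factorial : ℝ) := by
    rw [Nat.factorial_succ]; push_cast; ring
  have hsum : ((a + 1) + b) = T + 1 := by omega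
  rw [hfac2, hfacT, hfaca, hsum]
  have hpow : (0 : ℝ) < (a : ℝ) ^ a := by
    have : (0:ℝ) < (a:ℝ) := by exact_mod_cast ha
    positivity
  apply le_of_mul_le_mul_right _ hpow
  have h1 : (((T:ℝ) + 2) * ((T + 1).factorial : ℝ) * (((a+1:ℕ)):ℝ) ^ (a + 1) * (b : ℝ) ^ b * 27) * (a:ℝ)^a
      = (((T + 1).factorial : ℝ) * (a : ℝ) ^ a * (b : ℝ) ^ b * 27) * (((T:ℝ)+2) * ((a:ℝ)+1)^(a+1)) := by
    push_cast; ring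
  have h2 : (((T + 1).factorial : ℝ) * (a : ℝ) ^ a * (b : ℝ) ^ b * 27) * (((T:ℝ)+2) * ((a:ℝ)+1)^(a+1))
      ≤ (16 * (T : ℝ) * (a.factorial : ℝ) * (b.factorial : ℝ) * (T : ℝ) ^ T) * (((T:ℝ)+2) * ((a:ℝ)+1)^(a+1)) := by
    apply mul_le_mul_of_nonneg_right IH (by positivity)
  have h3 : (16 * (T : ℝ) * (a.factorial : ℝ) * (b.factorial : ℝ) * (T : ℝ) ^ T) * (((T:ℝ)+2) * ((a:ℝ)+1)^(a+1))
      = (16 * (a.factorial : ℝ) * (b.factorial : ℝ) * ((a:ℝ)+1))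
        * ((T : ℝ) ^ (T + 1) * ((T : ℝ) + 2) * ((a : ℝ) + 1) ^ a) := by ring
  have h4 : (16 * (a.factorial : ℝ) * (b.factorial : ℝ) * ((a:ℝ)+1))
        * ((T : ℝ) ^ (T + 1) * ((T : ℝ) + 2) * ((a : ℝ) + 1) ^ a)
      ≤ (16 * (a.factorial : ℝ) * (b.factorial : ℝ) * ((a:ℝ)+1))
        * (((T : ℝ) + 1) ^ (T + 2) * (a : ℝ) ^ a) := by
    apply mul_le_mul_of_nonneg_left hcore (by positivity)
  have h5 : (16 * (a.factorial : ℝ) * (b.factorial : ℝ) * ((a:ℝ)+1))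
        * (((T : ℝ) + 1) ^ (T + 2) * (a : ℝ) ^ a)
      = (16 * (((T+1:ℕ)):ℝ) * (((a:ℝ) + 1) * (a.factorial:ℝ)) * (b.factorial : ℝ) * (((T+1:ℕ)):ℝ) ^ (T + 1)) * (a:ℝ)^a := by
    push_cast; ring
  calc (((T:ℝ) + 2) * ((T + 1).factorial : ℝ) * (((a+1:ℕ)):ℝ) ^ (a + 1) * (b : ℝ) ^ b * 27) * (a:ℝ)^a
      = _ := h1
    _ ≤ _ := h2
    _ = _ := h3
    _ ≤ _ := h4
    _ = _ := h5

private lemma factBound : ∀ (T : ℕ), 3 ≤ T → ∀ a b : ℕ, 1 ≤ a → 1 ≤ b → a + b = T →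
    ((T + 1).factorial : ℝ) * (a : ℝ) ^ a * (b : ℝ) ^ b * 27
      ≤ 16 * (T : ℝ) * (a.factorial : ℝ) * (b.factorial : ℝ) * (T : ℝ) ^ T := by
  intro T hT
  induction T, hT using Nat.le_induction with
  | base =>
    intro a b ha hb hab
    have ha2 : a ≤ 2 := by omega
    interval_cases a
    · have : b = 2 := by omega
      subst this; norm_num [Nat.factorial]
    · have : b = 1 := by omega
      subst this; norm_num [Nat.factorial]
  | succ T hT IH =>
    intro a b ha hb hab
    rcases Nat.lt_or_ge a 2 with ha2 | ha2
    · -- a = 1, so b = T ≥ 3, decrement b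
      have ha1 : a = 1 := by omega
      subst ha1
      have hb2 : 2 ≤ b := by omega
      obtain ⟨b', rfl⟩ : ∃ b', b = b' + 1 := ⟨b - 1, by omega⟩
      have hb' : 1 ≤ b' := by omega
      have hIH := IH 1 b' (by omega) hb' (by omega)
      have hnb : 1 + b' = T := by omega
      rw [← hnb] at hIH
      have := incr b' 1 hb' (by omega) ?_
      · -- this : bound (b'+1) 1 ; need bound 1 (b'+1) with T+1 = 1 + (b'+1)
        have e1 : (b' + 1) + 1 + 1 = 1 + (b' + 1) + 1 := by omega
        have e2 : (b' + 1) + 1 = 1 + (b' + 1) := by omega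
        rw [e1, e2] at this
        have hsum : 1 + (b' + 1) = T + 1 := by omega
        rw [hsum] at this
        calc ((T + 1 + 1).factorial : ℝ) * (1 : ℕ) ^ 1 * ((b' + 1 : ℕ) : ℝ) ^ (b' + 1) * 27
            = ((T + 1 + 1).factorial : ℝ) * ((b' + 1 : ℕ) : ℝ) ^ (b' + 1) * ((1:ℕ) : ℝ) ^ 1 * 27 := by ring
          _ ≤ 16 * ((T + 1 : ℕ) : ℝ) * ((b' + 1).factorial : ℝ) * ((1:ℕ).factorial : ℝ) * ((T + 1 : ℕ) : ℝ) ^ (T + 1) := this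
          _ = 16 * ((T + 1 : ℕ) : ℝ) * ((1:ℕ).factorial : ℝ) * ((b' + 1).factorial : ℝ) * ((T + 1 : ℕ) : ℝ) ^ (T + 1) := by ring
          _ = 16 * ((T + 1 : ℕ) : ℝ) * ((1:ℕ).factorial : ℝ) * ((b' + 1).factorial : ℝ) * ((T + 1 : ℕ) : ℝ) ^ (T + 1) := rfl
      · -- IH in the swapped form for incr b' 1
        have hsum' : b' + 1 = T := by omega
        calc ((b' + 1 + 1).factorial : ℝ) * ((b' : ℕ) : ℝ) ^ b' * ((1:ℕ) : ℝ) ^ 1 * 27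
            = ((1 + b' + 1).factorial : ℝ) * ((1:ℕ) : ℝ) ^ 1 * ((b' : ℕ) : ℝ) ^ b' * 27 := by
              rw [show b' + 1 + 1 = 1 + b' + 1 by omega]; ring
          _ ≤ 16 * ((1 + b' : ℕ) : ℝ) * ((1:ℕ).factorial : ℝ) * (b'.factorial : ℝ) * ((1 + b' : ℕ) : ℝ) ^ (1 + b') := hIH
          _ = 16 * ((b' + 1 : ℕ) : ℝ) * (b'.factorial : ℝ) * ((1:ℕ).factorial : ℝ) * ((b' + 1 : ℕ) : ℝ) ^ (b' + 1) := by
              rw [show 1 + b' = b' + 1 by omega]; ring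
    · -- a ≥ 2: decrement a
      obtain ⟨a', rfl⟩ : ∃ a', a = a' + 1 := ⟨a - 1, by omega⟩
      have ha' : 1 ≤ a' := by omega
      have hIH := IH a' b ha' hb (by omega)
      have hnb : a' + b = T := by omega
      rw [← hnb] at hIH
      have := incr a' b ha' hb hIH
      have hsum : a' + 1 + b = T + 1 := by omega
      rw [hsum] at this
      exact this


private lemma pinsker (a b : ℕ) (ha : 1 ≤ a) (hb : 1 ≤ b) {x : ℝ}
    (hx : 0 < x) (hxM : x ≤ (a : ℝ) / ((a : ℝ) + b)) :
    x ^ a * (1 - x) ^ b ≤ ((a : ℝ) / ((a : ℝ) + b)) ^ a * ((b : ℝ) / ((a : ℝ) + b)) ^ b *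
      Real.exp (-(2 * ((a : ℝ) + b)) * ((a : ℝ) / ((a : ℝ) + b) - x) ^ 2) := by
  have ha' : (1 : ℝ) ≤ (a : ℝ) := by exact_mod_cast ha
  have hb' : (1 : ℝ) ≤ (b : ℝ) := by exact_mod_cast hb
  set T : ℝ := (a : ℝ) + b with hTdef
  have hT : 0 < T := by positivity
  set M : ℝ := (a : ℝ) / T with hMdef
  have hM0 : 0 < M := by positivity
  have hM1 : M < 1 := by
    rw [hMdef, div_lt_one hT]; linarith
  have h1M : 1 - M = (b : ℝ) / T := by
    rw [hMdef]; field_simp; rw [hTdef]; ring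
  have haM : (a : ℝ) = M * T := by rw [hMdef]; field_simp
  have hbM : (b : ℝ) = (1 - M) * T := by rw [h1M]; field_simp
  set g : ℝ → ℝ := fun y => (a : ℝ) * Real.log y + (b : ℝ) * Real.log (1 - y) + 2 * T * (M - y) ^ 2
    with hgdef
  have hderiv : ∀ y ∈ Ioo (0 : ℝ) M, HasDerivAt g
      ((a : ℝ) * y⁻¹ + (b : ℝ) * ((1 - y)⁻¹ * (-1)) + 2 * T * (2 * (M - y) ^ 1 * (-1))) y := by
    intro y hy
    have hy0 : 0 < y := hy.1
    have hy1 : 0 < 1 - y := by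
      have := hy.2; simp only [mem_Ioo] at hy; linarith [hy.2, hM1]
    have d1 : HasDerivAt (fun y : ℝ => (a : ℝ) * Real.log y) ((a : ℝ) * y⁻¹) y :=
      (Real.hasDerivAt_log hy0.ne').const_mul _
    have dinner : HasDerivAt (fun y : ℝ => 1 - y) (-1) y := by
      simpa using (hasDerivAt_id y).const_sub 1
    have d2 : HasDerivAt (fun y : ℝ => (b : ℝ) * Real.log (1 - y))
        ((b : ℝ) * ((1 - y)⁻¹ * (-1))) y := by
      have := (Real.hasDerivAt_log hy1.ne').comp y dinner
      exact this.const_mul _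
    have dinner2 : HasDerivAt (fun y : ℝ => M - y) (-1) y := by
      simpa using (hasDerivAt_id y).const_sub M
    have d3 : HasDerivAt (fun y : ℝ => 2 * T * (M - y) ^ 2)
        (2 * T * (2 * (M - y) ^ 1 * (-1))) y := by
      have := (dinner2.pow 2).const_mul (2 * T)
      simpa using this
    exact (d1.add d2).add d3
  have hmono : MonotoneOn g (Ioc (0 : ℝ) M) := by
    apply monotoneOn_of_deriv_nonneg (convex_Ioc 0 M)
    · -- continuity
      apply ContinuousOn.add
      apply ContinuousOn.add
      · exact continuousOn_const.mul (Real.continuousOn_log.mono (fun y hy => by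
          simp only [mem_compl_iff, mem_singleton_iff]; exact ne_of_gt hy.1))
      · apply continuousOn_const.mul
        have hcsub : Continuous fun y : ℝ => 1 - y := by fun_prop
        have hmaps : Set.MapsTo (fun y : ℝ => 1 - y) (Ioc (0 : ℝ) M) {(0:ℝ)}ᶜ := by
          intro y hy
          simp only [mem_Ioc] at hy
          simp only [mem_compl_iff, mem_singleton_iff]
          intro hcon
          have h1 : 1 - y > 0 := by linarith [hy.2, hM1]
          rw [hcon] at h1
          exact lt_irrefl 0 h1
        exact Real.continuousOn_log.comp hcsub.continuousOn hmaps
      · exact (continuous_const.mul ((continuous_const.sub continuous_id).pow 2)).continuousOn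
    · rw [interior_Ioc]
      intro y hy
      exact (hderiv y hy).differentiableAt.differentiableWithinAt
    · rw [interior_Ioc]
      intro y hy
      rw [(hderiv y hy).deriv]
      have hy0 : 0 < y := hy.1
      have hyM : y < M := hy.2
      have hy1 : 0 < 1 - y := by linarith
      have e : (a : ℝ) * y⁻¹ + (b : ℝ) * ((1 - y)⁻¹ * (-1)) + 2 * T * (2 * (M - y) ^ 1 * (-1))
          = ((a : ℝ) * (1 - y) - (b : ℝ) * y - 4 * T * (M - y) * (y * (1 - y))) / (y * (1 - y)) := by
        field_simp
        ring
      rw [e]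
      apply div_nonneg _ (by positivity)
      have e2 : (a : ℝ) * (1 - y) - (b : ℝ) * y - 4 * T * (M - y) * (y * (1 - y))
          = T * (M - y) * (1 - 2 * y) ^ 2 := by
        rw [haM, hbM]; ring
      rw [e2]
      apply mul_nonneg (mul_nonneg hT.le (by linarith)) (sq_nonneg _)
  have hgle : g x ≤ g M := by
    apply hmono ⟨hx, hxM⟩ ⟨hM0, le_refl M⟩ hxM
  have hx1 : 0 < 1 - x := by
    have : x ≤ M := hxM
    linarith
  have ex : x ^ a * (1 - x) ^ b = Real.exp ((a : ℝ) * Real.log x + (b : ℝ) * Real.log (1 - x)) := by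
    rw [Real.exp_add, Real.exp_nat_mul, Real.exp_nat_mul, Real.exp_log hx, Real.exp_log hx1]
  have eM : M ^ a * (1 - M) ^ b = Real.exp ((a : ℝ) * Real.log M + (b : ℝ) * Real.log (1 - M)) := by
    rw [Real.exp_add, Real.exp_nat_mul, Real.exp_nat_mul, Real.exp_log hM0, Real.exp_log (by linarith)]
  have key : (a : ℝ) * Real.log x + (b : ℝ) * Real.log (1 - x)
      ≤ (a : ℝ) * Real.log M + (b : ℝ) * Real.log (1 - M) + (-(2 * T) * (M - x) ^ 2) := by
    have h0 : g x = (a : ℝ) * Real.log x + (b : ℝ) * Real.log (1 - x) + 2 * T * (M - x) ^ 2 := rfl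
    have h1 : g M = (a : ℝ) * Real.log M + (b : ℝ) * Real.log (1 - M) := by
      simp [hgdef]
    rw [h0, h1] at hgle
    linarith
  calc x ^ a * (1 - x) ^ b
      = Real.exp ((a : ℝ) * Real.log x + (b : ℝ) * Real.log (1 - x)) := ex
    _ ≤ Real.exp ((a : ℝ) * Real.log M + (b : ℝ) * Real.log (1 - M) + (-(2 * T) * (M - x) ^ 2)) :=
        Real.exp_le_exp.mpr key
    _ = M ^ a * (1 - M) ^ b * Real.exp (-(2 * T) * (M - x) ^ 2) := by
        rw [Real.exp_add, ← eM]
    _ = M ^ a * ((b : ℝ) / T) ^ b * Real.exp (-(2 * T) * (M - x) ^ 2) := by rw [h1M]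

private lemma gauss_tail (c : ℝ) (hc : 0 < c) (u t : ℝ) (hu : 0 ≤ u) (h0t : 0 < t) :
    ∫ x in Ioc (0 : ℝ) t, Real.exp (-c * ((t + u) - x) ^ 2)
      ≤ Real.exp (-c * u ^ 2) * (Real.sqrt (π / c) / 2) := by
  have hcont1 : Continuous fun x : ℝ => Real.exp (-c * ((t + u) - x) ^ 2) := by continuity
  have hcont2 : Continuous fun x : ℝ => Real.exp (-c * u ^ 2) * Real.exp (-c * (t - x) ^ 2) := by
    continuity
  have step1 : ∫ x in Ioc (0 : ℝ) t, Real.exp (-c * ((t + u) - x) ^ 2)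
      ≤ ∫ x in Ioc (0 : ℝ) t, Real.exp (-c * u ^ 2) * Real.exp (-c * (t - x) ^ 2) := by
    apply setIntegral_mono_on (hcont1.integrableOn_Ioc) (hcont2.integrableOn_Ioc)
      measurableSet_Ioc
    intro x hx
    rw [← Real.exp_add]
    apply Real.exp_le_exp.mpr
    have htx : 0 ≤ t - x := by linarith [hx.2]
    nlinarith [mul_nonneg htx hu, hc.le]
  have step2 : ∫ x in Ioc (0 : ℝ) t, Real.exp (-c * u ^ 2) * Real.exp (-c * (t - x) ^ 2)
      = Real.exp (-c * u ^ 2) * ∫ x in Ioc (0 : ℝ) t, Real.exp (-c * (t - x) ^ 2) := by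
    rw [integral_const_mul]
  have step3 : ∫ x in Ioc (0 : ℝ) t, Real.exp (-c * (t - x) ^ 2)
      = ∫ x in Ioc (0 : ℝ) t, Real.exp (-c * x ^ 2) := by
    rw [← intervalIntegral.integral_of_le h0t.le, ← intervalIntegral.integral_of_le h0t.le]
    have := intervalIntegral.integral_comp_sub_left (a := 0) (b := t)
      (fun y : ℝ => Real.exp (-c * y ^ 2)) t
    simpa using this
  have step4 : ∫ x in Ioc (0 : ℝ) t, Real.exp (-c * x ^ 2)
      ≤ ∫ x in Ioi (0 : ℝ), Real.exp (-c * x ^ 2) := by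
    apply setIntegral_mono_set ((integrable_exp_neg_mul_sq hc).integrableOn)
    · filter_upwards with x using (Real.exp_pos _).le
    · exact HasSubset.Subset.eventuallyLE Ioc_subset_Ioi_self
  have step5 : ∫ x in Ioi (0 : ℝ), Real.exp (-c * x ^ 2) = Real.sqrt (π / c) / 2 :=
    integral_gaussian_Ioi c
  calc ∫ x in Ioc (0 : ℝ) t, Real.exp (-c * ((t + u) - x) ^ 2)
      ≤ ∫ x in Ioc (0 : ℝ) t, Real.exp (-c * u ^ 2) * Real.exp (-c * (t - x) ^ 2) := step1
    _ = Real.exp (-c * u ^ 2) * ∫ x in Ioc (0 : ℝ) t, Real.exp (-c * (t - x) ^ 2) := step2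
    _ ≤ Real.exp (-c * u ^ 2) * (Real.sqrt (π / c) / 2) := by
        apply mul_le_mul_of_nonneg_left _ (Real.exp_pos _).le
        rw [step3]
        rw [← step5]
        exact step4

private lemma numeric1 (T : ℝ) (hT : 0 < T) :
    16 * T / 27 * (Real.sqrt (π / (2 * T)) / 2) ≤ Real.exp (1 / 12) * Real.sqrt T / Real.sqrt (2 * π) := by
  set A := Real.sqrt (π / (2 * T)) with hA
  set B := Real.sqrt T with hB
  set C := Real.sqrt (2 * π) with hC
  have hC0 : 0 < C := Real.sqrt_pos.mpr (by positivity)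
  have hB0 : 0 < B := Real.sqrt_pos.mpr hT
  have hA0 : 0 ≤ A := Real.sqrt_nonneg _
  have hABC : A * (B * C) = π := by
    rw [hA, hB, hC, ← Real.sqrt_mul (by positivity), ← Real.sqrt_mul (by positivity)]
    have : π / (2 * T) * (T * (2 * π)) = π ^ 2 := by field_simp
    rw [this, Real.sqrt_sq Real.pi_pos.le]
  rw [le_div_iff₀ hC0]
  have hTB : T = B ^ 2 := (Real.sq_sqrt hT.le).symm
  have e : 16 * T / 27 * (A / 2) * C = 8 / 27 * (A * (B * C)) * B := by
    rw [hTB]; ring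
  rw [e, hABC]
  have h1 : 8 / 27 * π ≤ Real.exp (1 / 12) := by
    nlinarith [Real.pi_lt_d2, Real.add_one_le_exp (1 / 12 : ℝ)]
  nlinarith [hB0, h1]


private lemma beta_Iic_le (a b : ℕ) (t : ℝ) (ht1 : t < 1) :
    betaMeasure ((a : ℝ) + 1) ((b : ℝ) + 1) (Set.Iic t)
      = ENNReal.ofReal ((∫ x in Set.Ioc (0 : ℝ) t, x ^ a * (1 - x) ^ b)
          * (((a + b + 1).factorial : ℝ) / ((a.factorial : ℝ) * (b.factorial : ℝ)))) := by
  have hB : betaFun ((a : ℝ) + 1) ((b : ℝ) + 1)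
      = ((a.factorial : ℝ) * (b.factorial : ℝ)) / ((a + b + 1).factorial : ℝ) := by
    unfold betaFun
    have h1 : ((a : ℝ) + 1) + ((b : ℝ) + 1) = ((a + b + 1 : ℕ) : ℝ) + 1 := by push_cast; ring
    rw [h1, Real.Gamma_nat_eq_factorial, Real.Gamma_nat_eq_factorial, Real.Gamma_nat_eq_factorial]
  have hfa : (0 : ℝ) < (a.factorial : ℝ) := by exact_mod_cast a.factorial_pos
  have hfb : (0 : ℝ) < (b.factorial : ℝ) := by exact_mod_cast b.factorial_pos
  have hfab : (0 : ℝ) < ((a + b + 1).factorial : ℝ) := by exact_mod_cast (a + b + 1).factorial_pos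
  unfold betaMeasure
  rw [withDensity_apply _ measurableSet_Iic]
  rw [Measure.restrict_restrict measurableSet_Iic]
  have hset : Set.Iic t ∩ Set.Ioo (0 : ℝ) 1 = Set.Ioc (0 : ℝ) t := by
    ext x
    simp only [mem_inter_iff, mem_Iic, mem_Ioo, mem_Ioc]
    constructor
    · rintro ⟨h1, h2, h3⟩; exact ⟨h2, h1⟩
    · rintro ⟨h1, h2⟩; exact ⟨h2, h1, lt_of_le_of_lt h2 ht1⟩
  rw [hset]
  have hexp : ∀ x : ℝ, x ^ ((a : ℝ) + 1 - 1) * (1 - x) ^ ((b : ℝ) + 1 - 1)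
        / betaFun ((a : ℝ) + 1) ((b : ℝ) + 1)
      = x ^ a * (1 - x) ^ b * (((a + b + 1).factorial : ℝ) / ((a.factorial : ℝ) * (b.factorial : ℝ))) := by
    intro x
    rw [add_sub_cancel_right, add_sub_cancel_right, Real.rpow_natCast, Real.rpow_natCast, hB]
    field_simp
  simp_rw [hexp]
  have hint : IntegrableOn (fun x : ℝ => x ^ a * (1 - x) ^ b
      * (((a + b + 1).factorial : ℝ) / ((a.factorial : ℝ) * (b.factorial : ℝ)))) (Set.Ioc 0 t) := by
    apply Continuous.integrableOn_Ioc
    fun_prop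
  have hnn : 0 ≤ᶠ[ae (volume.restrict (Set.Ioc (0:ℝ) t))] fun x : ℝ => x ^ a * (1 - x) ^ b
      * (((a + b + 1).factorial : ℝ) / ((a.factorial : ℝ) * (b.factorial : ℝ))) := by
    rw [Filter.EventuallyLE, ae_restrict_iff' measurableSet_Ioc]
    refine Filter.Eventually.of_forall fun x hx => ?_
    simp only [Pi.zero_apply]
    have h1 : (0:ℝ) ≤ x := hx.1.le
    have h2 : (0:ℝ) ≤ 1 - x := by linarith [hx.2, ht1]
    positivity
  rw [← ofReal_integral_eq_lintegral_ofReal hint hnn]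
  rw [integral_mul_const]


set_option maxHeartbeats 2000000 in
private lemma fM_le (a b : ℕ) (ha : 1 ≤ a) (hb : 1 ≤ b) (h3 : 3 ≤ a + b) :
    ((a : ℝ) / ((a : ℝ) + b)) ^ a * ((b : ℝ) / ((a : ℝ) + b)) ^ b
      * (((a + b + 1).factorial : ℝ) / ((a.factorial : ℝ) * (b.factorial : ℝ)))
      ≤ 16 * ((a : ℝ) + b) / 27 := by
  have key := factBound (a + b) h3 a b ha hb rfl
  push_cast at key
  have ha' : (1:ℝ) ≤ (a:ℝ) := by exact_mod_cast ha
  have hb' : (1:ℝ) ≤ (b:ℝ) := by exact_mod_cast hb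
  have hT0 : (0:ℝ) < (a:ℝ) + b := by linarith
  have hfa : (0:ℝ) < (a.factorial : ℝ) := by exact_mod_cast a.factorial_pos
  have hfb : (0:ℝ) < (b.factorial : ℝ) := by exact_mod_cast b.factorial_pos
  rw [div_pow, div_pow, div_mul_div_comm, div_mul_div_comm]
  rw [div_le_div_iff₀ (by positivity) (by norm_num)]
  have hpow : ((a:ℝ)+b)^a * ((a:ℝ)+b)^b = ((a:ℝ)+b)^(a+b) := (pow_add _ a b).symm
  rw [show ((a:ℝ)+b)^a * ((a:ℝ)+b)^b * ((a.factorial:ℝ) * (b.factorial:ℝ))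
      = ((a:ℝ)+b)^(a+b) * ((a.factorial:ℝ) * (b.factorial:ℝ)) from by rw [hpow]]
  nlinarith [key]

set_option maxHeartbeats 2000000 in
private lemma main_bound (a b : ℕ) (ha : 1 ≤ a) (hb : 1 ≤ b) (d : ℝ) (hd : 0 ≤ d) :
    betaMeasure ((a : ℝ) + 1) ((b : ℝ) + 1) (Set.Iic ((a : ℝ) / ((a : ℝ) + b) - d))
      ≤ ENNReal.ofReal (Real.exp (1 / 12) * Real.sqrt ((a : ℝ) + b) / Real.sqrt (2 * π)
          * Real.exp (-((a : ℝ) + b) * d ^ 2)) := by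
  have ha' : (1:ℝ) ≤ (a:ℝ) := by exact_mod_cast ha
  have hb' : (1:ℝ) ≤ (b:ℝ) := by exact_mod_cast hb
  have hT0 : (0:ℝ) < (a:ℝ) + b := by linarith
  have hM1 : (a : ℝ) / ((a : ℝ) + b) < 1 := by
    rw [div_lt_one hT0]; linarith
  have ht1 : (a : ℝ) / ((a : ℝ) + b) - d < 1 := by linarith
  rw [beta_Iic_le a b _ ht1]
  apply ENNReal.ofReal_le_ofReal
  set T : ℝ := (a:ℝ) + b with hTdef
  set M : ℝ := (a:ℝ) / T with hMdef
  set t : ℝ := M - d with htdef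
  have hRpos : (0:ℝ) < ((a + b + 1).factorial : ℝ) / ((a.factorial : ℝ) * (b.factorial : ℝ)) := by
    have hfa : (0:ℝ) < (a.factorial : ℝ) := by exact_mod_cast a.factorial_pos
    have hfb : (0:ℝ) < (b.factorial : ℝ) := by exact_mod_cast b.factorial_pos
    have hfab : (0:ℝ) < ((a + b + 1).factorial : ℝ) := by exact_mod_cast (a + b + 1).factorial_pos
    positivity
  rcases le_or_gt t 0 with h0 | h0
  · rw [Set.Ioc_eq_empty (by simpa using h0 : ¬ (0:ℝ) < t)]
    rw [Measure.restrict_empty, integral_zero_measure]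
    rw [zero_mul]
    positivity
  · -- 0 < t
    have hMd : M = t + d := by rw [htdef]; ring
    have hexp2le : Real.exp (-(2 * T) * d ^ 2) ≤ Real.exp (-T * d ^ 2) := by
      apply Real.exp_le_exp.mpr
      nlinarith [sq_nonneg d]
    -- pointwise bound + integral
    have hK0 : (0:ℝ) ≤ M ^ a * ((b:ℝ)/T) ^ b := by positivity
    have step1 : (∫ x in Set.Ioc (0 : ℝ) t, x ^ a * (1 - x) ^ b)
        ≤ M ^ a * ((b:ℝ)/T) ^ b * (Real.exp (-(2*T) * d ^ 2) * (Real.sqrt (π / (2*T)) / 2)) := by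
      have hmono : (∫ x in Set.Ioc (0 : ℝ) t, x ^ a * (1 - x) ^ b)
          ≤ ∫ x in Set.Ioc (0 : ℝ) t,
              M ^ a * ((b:ℝ)/T) ^ b * Real.exp (-(2*T) * ((t + d) - x) ^ 2) := by
        apply setIntegral_mono_on
        · apply Continuous.integrableOn_Ioc; fun_prop
        · apply Continuous.integrableOn_Ioc; fun_prop
        · exact measurableSet_Ioc
        · intro x hx
          have hxM : x ≤ M := le_trans hx.2 (by rw [htdef]; linarith)
          have := pinsker a b ha hb hx.1 hxM
          rw [← hMd]
          exact this
      have heq : ∫ x in Set.Ioc (0 : ℝ) t,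
            M ^ a * ((b:ℝ)/T) ^ b * Real.exp (-(2*T) * ((t + d) - x) ^ 2)
          = M ^ a * ((b:ℝ)/T) ^ b
            * ∫ x in Set.Ioc (0 : ℝ) t, Real.exp (-(2*T) * ((t + d) - x) ^ 2) := by
        rw [integral_const_mul]
      have hgauss := gauss_tail (2*T) (by linarith) d t hd h0
      calc (∫ x in Set.Ioc (0 : ℝ) t, x ^ a * (1 - x) ^ b)
          ≤ _ := hmono
        _ = _ := heq
        _ ≤ M ^ a * ((b:ℝ)/T) ^ b * (Real.exp (-(2*T) * d ^ 2) * (Real.sqrt (π / (2*T)) / 2)) := by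
            apply mul_le_mul_of_nonneg_left hgauss hK0
    rcases Nat.lt_or_ge (a + b) 3 with hab3 | hab3
    · -- small case : a = b = 1
      have hab : a = 1 ∧ b = 1 := by omega
      obtain ⟨rfl, rfl⟩ := hab
      have hM : M = 1/2 := by rw [hMdef, hTdef]; norm_num
      have hT2 : T = 2 := by rw [hTdef]; norm_num
      have hd2 : d < 1/2 := by
        rw [htdef, hM] at h0; linarith
      have hI : (∫ x in Set.Ioc (0 : ℝ) t, x ^ (1:ℕ) * (1 - x) ^ (1:ℕ))
          = t^2/2 - t^3/3 := by
        rw [← intervalIntegral.integral_of_le h0.le]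
        have hrw : ∀ x : ℝ, x ^ (1:ℕ) * (1 - x) ^ (1:ℕ) = x - x^2 := by intro x; ring
        simp_rw [hrw]
        rw [intervalIntegral.integral_sub intervalIntegral.intervalIntegrable_id
          (intervalIntegral.intervalIntegrable_pow 2)]
        rw [integral_id, integral_pow]
        norm_num
      have hR : (((1 + 1 + 1).factorial : ℕ) : ℝ) / (((1:ℕ).factorial : ℝ) * ((1:ℕ).factorial : ℝ)) = 6 := by
        norm_num [Nat.factorial]
      rw [hI, hR]
      have hsq2pi : Real.sqrt (2*π) = Real.sqrt 2 * Real.sqrt π := Real.sqrt_mul (by norm_num) _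
      have hC : Real.exp (1/12) * Real.sqrt T / Real.sqrt (2*π) = Real.exp (1/12) / Real.sqrt π := by
        rw [hT2, hsq2pi]
        have h2 : Real.sqrt 2 ≠ 0 := by positivity
        field_simp
      rw [hC, hT2]
      have hsπ : Real.sqrt π ≤ 1.775 := by
        have hh : (π:ℝ) ≤ (1.775:ℝ)^2 := by nlinarith [Real.pi_lt_d2]
        calc Real.sqrt π ≤ Real.sqrt ((1.775:ℝ)^2) := Real.sqrt_le_sqrt hh
          _ = (1.775:ℝ) := Real.sqrt_sq (by norm_num)
      have hsπ0 : 0 < Real.sqrt π := Real.sqrt_pos.mpr Real.pi_pos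
      have hE : (13:ℝ)/12 ≤ Real.exp (1/12) := by
        linarith [Real.add_one_le_exp (1/12 : ℝ)]
      have hC61 : (61:ℝ)/100 ≤ Real.exp (1/12) / Real.sqrt π := by
        rw [le_div_iff₀ hsπ0]
        nlinarith
      have hexp' : 1 - 2*d^2 ≤ Real.exp (-(2:ℝ) * d^2) := by
        have := Real.add_one_le_exp (-(2:ℝ) * d^2)
        linarith
      have hpoly : (t^2/2 - t^3/3) * 6 ≤ 61/100 * (1 - 2*d^2) := by
        have ht : t = 1/2 - d := by rw [htdef, hM]
        rw [ht]
        nlinarith [mul_nonneg hd (by linarith : (0:ℝ) ≤ 1/2 - d), sq_nonneg d,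
          mul_nonneg (mul_nonneg hd hd) hd, mul_nonneg (mul_nonneg hd hd) (by linarith : (0:ℝ) ≤ 1/2 - d)]
      calc (t^2/2 - t^3/3) * 6
          ≤ 61/100 * (1 - 2*d^2) := hpoly
        _ ≤ 61/100 * Real.exp (-(2:ℝ) * d^2) := by
            apply mul_le_mul_of_nonneg_left hexp' (by norm_num)
        _ ≤ Real.exp (1/12) / Real.sqrt π * Real.exp (-(2:ℝ) * d^2) := by
            apply mul_le_mul_of_nonneg_right hC61 (Real.exp_pos _).le
    · -- big case
      have hfm := fM_le a b ha hb hab3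
      have hG0 : (0:ℝ) ≤ Real.sqrt (π / (2*T)) / 2 := by positivity
      have hE0 : (0:ℝ) ≤ Real.exp (-(2*T) * d ^ 2) := (Real.exp_pos _).le
      calc (∫ x in Set.Ioc (0 : ℝ) t, x ^ a * (1 - x) ^ b)
            * (((a + b + 1).factorial : ℝ) / ((a.factorial : ℝ) * (b.factorial : ℝ)))
          ≤ (M ^ a * ((b:ℝ)/T) ^ b * (Real.exp (-(2*T) * d ^ 2) * (Real.sqrt (π / (2*T)) / 2)))
            * (((a + b + 1).factorial : ℝ) / ((a.factorial : ℝ) * (b.factorial : ℝ))) := by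
            apply mul_le_mul_of_nonneg_right step1 hRpos.le
        _ = (M ^ a * ((b:ℝ)/T) ^ b
              * (((a + b + 1).factorial : ℝ) / ((a.factorial : ℝ) * (b.factorial : ℝ))))
            * (Real.sqrt (π / (2*T)) / 2) * Real.exp (-(2*T) * d ^ 2) := by ring
        _ ≤ (16 * T / 27) * (Real.sqrt (π / (2*T)) / 2) * Real.exp (-(2*T) * d ^ 2) := by
            apply mul_le_mul_of_nonneg_right _ hE0
            apply mul_le_mul_of_nonneg_right _ hG0
            exact hfm
        _ ≤ (Real.exp (1/12) * Real.sqrt T / Real.sqrt (2*π)) * Real.exp (-(2*T) * d ^ 2) := by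
            apply mul_le_mul_of_nonneg_right (numeric1 T hT0) hE0
        _ ≤ (Real.exp (1/12) * Real.sqrt T / Real.sqrt (2*π)) * Real.exp (-T * d ^ 2) := by
            apply mul_le_mul_of_nonneg_left hexp2le (by positivity)


end Aux

open Set in
/-- **Remark** (concentration of a Beta random variable below its mode): let
`V ~ Beta(α+1, β+1)` with `α, β` positive integers, `T = α + β` and `M = α/(α+β)`.
Then for every `ν ∈ (0,1]`,
`P(V ≤ M - √((1/T) ln(e^(1/12) √T/(ν √(2π))))) ≤ ν`. -/
theorem beta_concentration_below_mode
    {Ω : Type} [MeasurableSpace Ω] (μ : Measure Ω) [IsProbabilityMeasure μ]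
    (α β : ℕ) (hα : 0 < α) (hβ : 0 < β)
    (V : Ω → ℝ) (hmeas : Measurable V)
    (hlaw : μ.map V = betaMeasure ((α : ℝ) + 1) ((β : ℝ) + 1))
    (ν : ℝ) (hν : ν ∈ Set.Ioc (0 : ℝ) 1) :
    μ {ω | V ω ≤ (α : ℝ) / ((α : ℝ) + β)
        - Real.sqrt (1 / ((α : ℝ) + β)
            * Real.log (Real.exp (1 / 12) * Real.sqrt ((α : ℝ) + β)
                / (ν * Real.sqrt (2 * Real.pi))))} ≤ ENNReal.ofReal ν := by
  obtain ⟨hν0, hν1⟩ := hν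
  have hα' : (1:ℝ) ≤ (α:ℝ) := by exact_mod_cast hα
  have hβ' : (1:ℝ) ≤ (β:ℝ) := by exact_mod_cast hβ
  have hT0 : (0:ℝ) < (α:ℝ) + β := by linarith
  set T : ℝ := (α:ℝ) + β with hTdef
  set C : ℝ := Real.exp (1/12) * Real.sqrt T / Real.sqrt (2 * π) with hCdef
  have hC0 : 0 < C := by
    rw [hCdef]
    have h1 : 0 < Real.sqrt T := Real.sqrt_pos.mpr hT0
    have h2 : 0 < Real.sqrt (2 * π) := Real.sqrt_pos.mpr (by positivity)
    positivity
  set d : ℝ := Real.sqrt (1 / T * Real.log (Real.exp (1/12) * Real.sqrt T / (ν * Real.sqrt (2 * π))))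
    with hddef
  have hd0 : 0 ≤ d := Real.sqrt_nonneg _
  have hlogarg : Real.exp (1/12) * Real.sqrt T / (ν * Real.sqrt (2 * π)) = C / ν := by
    rw [hCdef, div_div]
    ring_nf
  have hpre : {ω | V ω ≤ (α:ℝ) / T - d} = V ⁻¹' (Set.Iic ((α:ℝ) / T - d)) := rfl
  rw [hpre, ← Measure.map_apply hmeas measurableSet_Iic, hlaw]
  refine le_trans (main_bound α β hα hβ d hd0) (ENNReal.ofReal_le_ofReal ?_)
  rw [← hTdef, ← hCdef]
  -- C * exp (-T * d^2) ≤ ν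
  rcases le_or_gt 0 (Real.log (C / ν)) with hL | hL
  · have hd2 : d ^ 2 = 1 / T * Real.log (C / ν) := by
      rw [hddef, hlogarg]
      exact Real.sq_sqrt (by positivity)
    have hTd2 : -T * d ^ 2 = - Real.log (C / ν) := by
      rw [hd2]; field_simp
    rw [hTd2, Real.exp_neg, Real.exp_log (by positivity)]
    have heq : C * (C / ν)⁻¹ = ν := by
      field_simp
    exact le_of_eq heq
  · have hd' : d = 0 := by
      rw [hddef, hlogarg]
      apply Real.sqrt_eq_zero_of_nonpos
      have h1T : 0 < 1 / T := by positivity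
      nlinarith
    rw [hd']
    norm_num
    have : C / ν < 1 := (Real.log_neg_iff (by positivity)).mp hL
    calc C = C / ν * ν := by field_simp
      _ ≤ 1 * ν := by apply mul_le_mul_of_nonneg_right this.le hν0.le
      _ = ν := one_mul ν


end TSPaper
end
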